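/- Let x be a nonzero vector with ρ := f(x) satisfying λ₁ ≤ ρ < (λ₁+λ₂)/2, and set r = Ax − ρMx. Then (rᵀA⁻¹r)/(xᵀMx) ≤ ρ(ρ−λ₁)/λ₁. -/

import Mathlib

/-!
Expand `x = ∑ cᵢ uᵢ` in the `M`-orthonormal eigenbasis. Then `xᵀMx = ∑ cᵢ²`, `xᵀAx = ∑ λᵢ cᵢ²`,
`A⁻¹ = U diag(λ)⁻¹ Uᵀ` and `rᵀA⁻¹r = ∑ (λᵢ - ρ)²/λᵢ cᵢ²`. Termwise
`(λ - ρ)²/λ = ρ(ρ - λ₁)/λ₁ + (λ - ρ) - ρ²(λ - λ₁)/(λλ₁)`, and summing against `cᵢ²` kills the middle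
term because `ρ` is the Rayleigh quotient of `x`.
-/

open Matrix

lemma sq_sub_div_le_of_le {μ l ρ : ℝ} (hμ : 0 < μ) (hl : μ ≤ l) :
    (l - ρ) ^ 2 / l ≤ ρ * (ρ - μ) / μ + (l - ρ) := by
  have hl₀ : 0 < l := hμ.trans_le hl
  rw [div_add' _ _ _ hμ.ne', div_le_div_iff₀ hl₀ hμ]
  nlinarith [mul_nonneg (sq_nonneg ρ) (sub_nonneg.mpr hl)]

lemma sum_sq_sub_div_mul_le {ι : Type*} [Fintype ι] {d c : ι → ℝ} {μ ρ : ℝ} (hμ : 0 < μ)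
    (hd : ∀ i, μ ≤ d i) (hρ : ∑ i, d i * c i ^ 2 = ρ * ∑ i, c i ^ 2) :
    ∑ i, (d i - ρ) ^ 2 / d i * c i ^ 2 ≤ ρ * (ρ - μ) / μ * ∑ i, c i ^ 2 := by
  calc ∑ i, (d i - ρ) ^ 2 / d i * c i ^ 2
      ≤ ∑ i, (ρ * (ρ - μ) / μ + (d i - ρ)) * c i ^ 2 := by
        gcongr with i
        exact sq_sub_div_le_of_le hμ (hd i)
    _ = ρ * (ρ - μ) / μ * ∑ i, c i ^ 2 + (∑ i, d i * c i ^ 2 - ρ * ∑ i, c i ^ 2) := by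
        simp only [add_mul, sub_mul, Finset.sum_add_distrib, Finset.sum_sub_distrib,
          Finset.mul_sum]
    _ = ρ * (ρ - μ) / μ * ∑ i, c i ^ 2 := by rw [hρ, sub_self, add_zero]

namespace Matrix

variable {ι : Type*} [Fintype ι] [DecidableEq ι]

lemma of_mul_mul_transpose_eq_one {M : Matrix ι ι ℝ} {u : ι → ι → ℝ}
    (horth : ∀ i j, u i ⬝ᵥ M *ᵥ u j = if i = j then 1 else 0) :
    of u * M * (of u)ᵀ = 1 := by
  ext i j
  rw [Matrix.mul_assoc, mul_apply, one_apply, ← horth]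
  simp [dotProduct, mulVec, mul_apply]

lemma mul_transpose_of_eq_mul_mul_diagonal {A M : Matrix ι ι ℝ} {u : ι → ι → ℝ} {d : ι → ℝ}
    (heig : ∀ i, A *ᵥ u i = d i • M *ᵥ u i) :
    A * (of u)ᵀ = M * (of u)ᵀ * diagonal d := by
  ext i j
  have hij := congrFun (heig j) i
  simp only [mulVec, dotProduct, Pi.smul_apply, smul_eq_mul] at hij
  rw [mul_diagonal]
  simp only [mul_apply, transpose_apply, of_apply, hij, mul_comm]

variable {A M U : Matrix ι ι ℝ} {d : ι → ℝ}

lemma mulVec_transpose_mul_mulVec (hU : Uᵀ * M * U = 1) (x : ι → ℝ) :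
    U *ᵥ ((Uᵀ * M) *ᵥ x) = x := by
  rw [mulVec_mulVec, mul_eq_one_comm.mp hU, one_mulVec]

lemma mulVec_dotProduct_mulVec_mulVec (hU : Uᵀ * M * U = 1) (a b : ι → ℝ) :
    (U *ᵥ a) ⬝ᵥ M *ᵥ U *ᵥ b = a ⬝ᵥ b := by
  rw [← vecMul_transpose, ← dotProduct_mulVec, mulVec_mulVec, mulVec_mulVec, hU, one_mulVec]

lemma mulVec_mulVec_eq_of_mul_eq (hAU : A * U = M * U * diagonal d) (b : ι → ℝ) :
    A *ᵥ U *ᵥ b = M *ᵥ U *ᵥ (diagonal d *ᵥ b) := by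
  rw [mulVec_mulVec, hAU, ← mulVec_mulVec, ← mulVec_mulVec]

lemma inv_eq_mul_diagonal_inv_mul_transpose (hU : Uᵀ * M * U = 1)
    (hAU : A * U = M * U * diagonal d) (hd : ∀ i, d i ≠ 0) : A⁻¹ = U * diagonal d⁻¹ * Uᵀ := by
  apply inv_eq_right_inv
  have hdd : diagonal d * diagonal d⁻¹ = 1 := by
    rw [diagonal_mul_diagonal, ← diagonal_one]
    exact congrArg diagonal (funext fun i => mul_inv_cancel₀ (hd i))
  rw [← Matrix.mul_assoc, ← Matrix.mul_assoc, hAU, Matrix.mul_assoc (M * U), hdd, Matrix.mul_one,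
    mul_eq_one_comm, ← Matrix.mul_assoc, hU]

lemma mulVec_dotProduct_mulVec_mulVec_self (hU : Uᵀ * M * U = 1) (c : ι → ℝ) :
    (U *ᵥ c) ⬝ᵥ M *ᵥ U *ᵥ c = ∑ i, c i ^ 2 := by
  rw [mulVec_dotProduct_mulVec_mulVec hU, dotProduct]
  simp only [sq]

lemma mulVec_dotProduct_mulVec_mulVec_self_of_mul_eq (hU : Uᵀ * M * U = 1)
    (hAU : A * U = M * U * diagonal d) (c : ι → ℝ) :
    (U *ᵥ c) ⬝ᵥ A *ᵥ U *ᵥ c = ∑ i, d i * c i ^ 2 := by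
  rw [mulVec_mulVec_eq_of_mul_eq hAU, mulVec_dotProduct_mulVec_mulVec hU, dotProduct]
  exact Finset.sum_congr rfl fun i _ => by rw [mulVec_diagonal]; ring

lemma residual_dotProduct_inv_mulVec (hU : Uᵀ * M * U = 1) (hAU : A * U = M * U * diagonal d)
    (hd : ∀ i, d i ≠ 0) (c : ι → ℝ) (ρ : ℝ) :
    (A *ᵥ U *ᵥ c - ρ • M *ᵥ U *ᵥ c) ⬝ᵥ A⁻¹ *ᵥ (A *ᵥ U *ᵥ c - ρ • M *ᵥ U *ᵥ c)
      = ∑ i, (d i - ρ) ^ 2 / d i * c i ^ 2 := by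
  set w := diagonal d *ᵥ c - ρ • c
  have hr : A *ᵥ U *ᵥ c - ρ • M *ᵥ U *ᵥ c = M *ᵥ U *ᵥ w := by
    rw [mulVec_mulVec_eq_of_mul_eq hAU, mulVec_sub, mulVec_sub, mulVec_smul, mulVec_smul]
  have hinv : A⁻¹ *ᵥ M *ᵥ U *ᵥ w = U *ᵥ diagonal d⁻¹ *ᵥ w := by
    rw [inv_eq_mul_diagonal_inv_mul_transpose hU hAU hd, ← mulVec_mulVec, ← mulVec_mulVec,
      mulVec_mulVec _ M, mulVec_mulVec _ Uᵀ, ← Matrix.mul_assoc, hU, one_mulVec]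
  rw [hr, hinv, dotProduct_comm, mulVec_dotProduct_mulVec_mulVec hU, dotProduct]
  refine Finset.sum_congr rfl fun i _ => ?_
  simp only [w, mulVec_diagonal, Pi.sub_apply, Pi.smul_apply, Pi.inv_apply, smul_eq_mul]
  field_simp [hd i]

end Matrix

theorem statement_5_general {n : ℕ}
    (A M : Matrix (Fin (n+2)) (Fin (n+2)) ℝ)
    (hM : M.PosDef)
    (lam : Fin (n+2) → ℝ) (u : Fin (n+2) → (Fin (n+2) → ℝ))
    (hlam_pos : 0 < lam 0) (hmono : Monotone lam)
    (heig : ∀ i, A *ᵥ u i = lam i • (M *ᵥ u i))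
    (horth : ∀ i j, u i ⬝ᵥ M *ᵥ u j = if i = j then 1 else 0)
    (x : Fin (n+2) → ℝ) (hx : x ≠ 0)
    (ρ : ℝ) (hρdef : ρ = (x ⬝ᵥ A *ᵥ x) / (x ⬝ᵥ M *ᵥ x))
    (r : Fin (n+2) → ℝ) (hr : r = A *ᵥ x - ρ • (M *ᵥ x)) :
    (r ⬝ᵥ A⁻¹ *ᵥ r) / (x ⬝ᵥ M *ᵥ x) ≤ ρ * (ρ - lam 0) / lam 0 := by
  set U := (of u)ᵀ
  have hU : Uᵀ * M * U = 1 := of_mul_mul_transpose_eq_one horth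
  have hAU : A * U = M * U * diagonal lam := mul_transpose_of_eq_mul_mul_diagonal heig
  have hlam : ∀ i, lam 0 ≤ lam i := fun i => hmono (Fin.zero_le i)
  have hlam_ne : ∀ i, lam i ≠ 0 := fun i => (hlam_pos.trans_le (hlam i)).ne'
  obtain ⟨c, rfl⟩ : ∃ c, U *ᵥ c = x := ⟨_, mulVec_transpose_mul_mulVec hU x⟩
  have hMx : 0 < (U *ᵥ c) ⬝ᵥ M *ᵥ U *ᵥ c := by simpa using hM.dotProduct_mulVec_pos hx
  rw [mulVec_dotProduct_mulVec_mulVec_self hU] at hρdef hMx ⊢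
  rw [mulVec_dotProduct_mulVec_mulVec_self_of_mul_eq hU hAU] at hρdef
  rw [hr, residual_dotProduct_inv_mulVec hU hAU hlam_ne, div_le_iff₀ hMx]
  exact sum_sq_sub_div_mul_le hlam_pos hlam (by rw [hρdef, div_mul_cancel₀ _ hMx.ne'])

/-- Residual bound in the A⁻¹-norm. -/
theorem statement_5 {n : ℕ}
    (A M : Matrix (Fin (n+2)) (Fin (n+2)) ℝ)
    (hA : A.PosDef) (hM : M.PosDef)
    (lam : Fin (n+2) → ℝ) (u : Fin (n+2) → (Fin (n+2) → ℝ))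
    (hlam_pos : 0 < lam 0) (hgap : lam 0 < lam 1) (hmono : Monotone lam)
    (heig : ∀ i, A *ᵥ u i = lam i • (M *ᵥ u i))
    (horth : ∀ i j, u i ⬝ᵥ M *ᵥ u j = if i = j then 1 else 0)
    (x : Fin (n+2) → ℝ) (hx : x ≠ 0)
    (ρ : ℝ) (hρdef : ρ = (x ⬝ᵥ A *ᵥ x) / (x ⬝ᵥ M *ᵥ x))
    (hρ1 : lam 0 ≤ ρ) (hρ2 : ρ < (lam 0 + lam 1) / 2)
    (r : Fin (n+2) → ℝ) (hr : r = A *ᵥ x - ρ • (M *ᵥ x)) :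
    (r ⬝ᵥ A⁻¹ *ᵥ r) / (x ⬝ᵥ M *ᵥ x) ≤ ρ * (ρ - lam 0) / lam 0 :=
  statement_5_general A M hM lam u hlam_pos hmono heig horth x hx ρ hρdef r hr
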